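/- Let A* ∈ ℂ^{M×N} be an isometry and f ∈ ℂ^N with A* f having all entries nonzero. Let B = A diag(sgn(A* f)) and suppose x ∈ ℂ^N satisfies ‖Im(B* x)‖ = ‖x‖. Then for every j, Re(a_j* x) Re(a_j* f) + Im(a_j* x) Im(a_j* f) = 0, where a_j* is the j-th row of A*; equivalently Re( conj(a_j* f) · (a_j* x) ) = 0 for all j. -/

import Mathlib

open Matrix Complex BigOperators

/-- Componentwise sign: `sgn z = z/|z|` for `z ≠ 0`, `sgn 0 = 1`. -/
noncomputable def csgn (z : ℂ) : ℂ := if z = 0 then 1 else z / (‖z‖ : ℂ)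

/-!
The `j`-th entry of `B* x` is `conj (sgn (a_j* f)) · a_j* x`, of modulus `|a_j* x|`, so
`(Im (B* x)_j)² ≤ |a_j* x|²` termwise, and these sum to `‖A* x‖² = ‖x‖²`. Equality of the sums
forces `Re (conj (sgn (a_j* f)) · a_j* x) = 0` for every `j`; multiplying by `|a_j* f|` turns
`sgn (a_j* f)` back into `a_j* f`.
-/

open ComplexConjugate

theorem norm_csgn (z : ℂ) : ‖csgn z‖ = 1 := by
  by_cases hz : z = 0 <;> simp [csgn, hz]

theorem norm_mul_csgn (z : ℂ) : (‖z‖ : ℂ) * csgn z = z := by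
  by_cases hz : z = 0
  · simp [csgn, hz]
  · rw [csgn, if_neg hz, mul_div_cancel₀ _ (by simpa using hz)]

theorem Complex.re_eq_zero_of_im_sq_eq_norm_sq {z : ℂ} (h : z.im ^ 2 = ‖z‖ ^ 2) : z.re = 0 := by
  rw [Complex.sq_norm, Complex.normSq_apply] at h
  nlinarith

theorem Complex.re_eq_zero_of_sum_im_sq_eq_sum_norm_sq {ι : Type*} [Fintype ι] {z : ι → ℂ}
    (h : ∑ j, (z j).im ^ 2 = ∑ j, ‖z j‖ ^ 2) (j : ι) : (z j).re = 0 := by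
  have hle : ∀ j ∈ Finset.univ, (z j).im ^ 2 ≤ ‖z j‖ ^ 2 := fun j _ =>
    sq_le_sq' (neg_le_of_abs_le (abs_im_le_norm _)) ((le_abs_self _).trans (abs_im_le_norm _))
  exact re_eq_zero_of_im_sq_eq_norm_sq
    ((Finset.sum_eq_sum_iff_of_le hle).mp h j (Finset.mem_univ j))

theorem Matrix.conjTranspose_mul_diagonal_mulVec {m n R : Type*} [Fintype m] [Fintype n]
    [DecidableEq m] [CommSemiring R] [StarRing R] (A : Matrix m n R) (d : m → R) (x : n → R)
    (j : m) : ((Aᴴ * diagonal d)ᴴ *ᵥ x) j = star (d j) * (A *ᵥ x) j := by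
  simp [conjTranspose_mul, ← mulVec_mulVec, mulVec_diagonal]

theorem Matrix.sum_norm_sq_mulVec_of_conjTranspose_mul_self_eq_one {m n : Type*} [Fintype m]
    [Fintype n] [DecidableEq n] {A : Matrix m n ℂ} (hA : Aᴴ * A = 1) (x : n → ℂ) :
    ∑ j, ‖(A *ᵥ x) j‖ ^ 2 = ∑ i, ‖x i‖ ^ 2 := by
  have h : star (A *ᵥ x) ⬝ᵥ (A *ᵥ x) = star x ⬝ᵥ x := by
    rw [star_mulVec, dotProduct_mulVec, vecMul_vecMul, hA, vecMul_one]
  simpa [dotProduct, Complex.sq_norm, Complex.normSq_apply] using congrArg re h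

theorem equality_case_general (M N : ℕ) (Astar : Matrix (Fin M) (Fin N) ℂ)
    (hA : Astarᴴ * Astar = 1) (f : Fin N → ℂ)
    (B : Matrix (Fin N) (Fin M) ℂ)
    (hB : B = Astarᴴ * Matrix.diagonal (fun j => csgn (Astar.mulVec f j)))
    (x : Fin N → ℂ)
    (heq : Real.sqrt (∑ j, ((Bᴴ.mulVec x) j).im ^ 2)
      = Real.sqrt (∑ i, ‖x i‖ ^ 2)) :
    ∀ j, (Astar.mulVec x j).re * (Astar.mulVec f j).re
        + (Astar.mulVec x j).im * (Astar.mulVec f j).im = 0 := by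
  intro j
  set y := Astar *ᵥ x
  set w := Astar *ᵥ f
  have hBx : ∀ j, (Bᴴ *ᵥ x) j = conj (csgn (w j)) * y j := by
    subst hB
    exact conjTranspose_mul_diagonal_mulVec Astar _ x
  have hnorm : ∀ j, ‖(Bᴴ *ᵥ x) j‖ = ‖y j‖ := by
    simp [hBx, norm_csgn]
  have hsum : ∑ j, ((Bᴴ *ᵥ x) j).im ^ 2 = ∑ j, ‖(Bᴴ *ᵥ x) j‖ ^ 2 := by
    rw [Real.sqrt_inj (by positivity) (by positivity)] at heq
    simp only [hnorm, heq]
    exact (sum_norm_sq_mulVec_of_conjTranspose_mul_self_eq_one hA x).symm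
  have hre : (conj (w j) * y j).re = 0 := by
    rw [← norm_mul_csgn (w j), map_mul, conj_ofReal, mul_assoc, re_ofReal_mul, ← hBx,
      re_eq_zero_of_sum_im_sq_eq_sum_norm_sq hsum j, mul_zero]
  simpa [mul_re, mul_comm] using hre

/-- Equality case: if `A*` is an isometry with `A* f` nowhere zero, `B = A diag(sgn(A* f))`,
and `‖Im(B* x)‖ = ‖x‖`, then `Re(conj(a_j* f)(a_j* x)) = 0` for every `j`. -/
theorem equality_case (M N : ℕ) (Astar : Matrix (Fin M) (Fin N) ℂ)
    (hA : Astarᴴ * Astar = 1) (f : Fin N → ℂ)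
    (hnz : ∀ j, Astar.mulVec f j ≠ 0)
    (B : Matrix (Fin N) (Fin M) ℂ)
    (hB : B = Astarᴴ * Matrix.diagonal (fun j => csgn (Astar.mulVec f j)))
    (x : Fin N → ℂ)
    (heq : Real.sqrt (∑ j, ((Bᴴ.mulVec x) j).im ^ 2)
      = Real.sqrt (∑ i, ‖x i‖ ^ 2)) :
    ∀ j, (Astar.mulVec x j).re * (Astar.mulVec f j).re
        + (Astar.mulVec x j).im * (Astar.mulVec f j).im = 0 :=
  equality_case_general M N Astar hA f B hB x heq
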